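/- arXiv:2512.19140 — 2 statements merged into one kernel-verified Lean document; each statement's English description precedes it below -/
import Mathlib

section
/- The quiver braid group G, presented with generators g1, g2, g3 and relations g1g2g1 = g2g1g2, g1g3g1 = g3g1g3, g2g3g2 = g3g2g3, and g1g2g3g1 = g2g3g1g2, is isomorphic to the Artin braid group Br4; an isomorphism G → Br4 is induced by g1 ↦ s1, g2 ↦ s2, g3 ↦ s2⁻¹·s3·s2. -/
/-- The relators of the quiver braid group `G` on generators `g1, g2, g3`:
`g1g2g1 = g2g1g2`, `g1g3g1 = g3g1g3`, `g2g3g2 = g3g2g3`, and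
`g1g2g3g1 = g2g3g1g2`. -/
def quiverRels : Set (FreeGroup (Fin 3)) :=
  { FreeGroup.of 0 * FreeGroup.of 1 * FreeGroup.of 0 *
      (FreeGroup.of 1 * FreeGroup.of 0 * FreeGroup.of 1)⁻¹,
    FreeGroup.of 0 * FreeGroup.of 2 * FreeGroup.of 0 *
      (FreeGroup.of 2 * FreeGroup.of 0 * FreeGroup.of 2)⁻¹,
    FreeGroup.of 1 * FreeGroup.of 2 * FreeGroup.of 1 *
      (FreeGroup.of 2 * FreeGroup.of 1 * FreeGroup.of 2)⁻¹,
    FreeGroup.of 0 * FreeGroup.of 1 * FreeGroup.of 2 * FreeGroup.of 0 *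
      (FreeGroup.of 1 * FreeGroup.of 2 * FreeGroup.of 0 * FreeGroup.of 1)⁻¹ }

/-- The quiver braid group `G`. -/
abbrev QuiverBraidGroup := PresentedGroup quiverRels

/-- The generators `g1, g2, g3` of `G` (indexed by `0, 1, 2`). -/
def g (i : Fin 3) : QuiverBraidGroup := PresentedGroup.of i

/-- The relators of the Artin braid group `Br₄` on generators `s1, s2, s3`:
`s1s2s1 = s2s1s2`, `s2s3s2 = s3s2s3`, and `s1s3 = s3s1`. -/
def braidRels4 : Set (FreeGroup (Fin 3)) :=
  { FreeGroup.of 0 * FreeGroup.of 1 * FreeGroup.of 0 *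
      (FreeGroup.of 1 * FreeGroup.of 0 * FreeGroup.of 1)⁻¹,
    FreeGroup.of 1 * FreeGroup.of 2 * FreeGroup.of 1 *
      (FreeGroup.of 2 * FreeGroup.of 1 * FreeGroup.of 2)⁻¹,
    FreeGroup.of 0 * FreeGroup.of 2 * (FreeGroup.of 2 * FreeGroup.of 0)⁻¹ }

/-- The Artin braid group `Br₄`. -/
abbrev BraidGroup4 := PresentedGroup braidRels4

/-- The generators `s1, s2, s3` of `Br₄` (indexed by `0, 1, 2`). -/
def s (i : Fin 3) : BraidGroup4 := PresentedGroup.of i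

-- relators hold in a presented group
lemma rel_eq_one {α : Type*} {rels : Set (FreeGroup α)} {r : FreeGroup α} (hr : r ∈ rels) :
    (QuotientGroup.mk' (Subgroup.normalClosure rels) r : PresentedGroup rels) = 1 := by
  rw [QuotientGroup.mk'_apply, QuotientGroup.eq_one_iff]
  exact Subgroup.subset_normalClosure hr

-- Br4 relations
lemma br1 : s 0 * s 1 * s 0 = s 1 * s 0 * s 1 := by
  have := rel_eq_one (rels := braidRels4) (Set.mem_insert _ _)
  simp only [map_mul, map_inv, QuotientGroup.mk'_apply] at this
  rw [mul_inv_eq_one] at this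
  exact this

lemma br2 : s 1 * s 2 * s 1 = s 2 * s 1 * s 2 := by
  have := rel_eq_one (rels := braidRels4)
    (Set.mem_insert_of_mem _ (Set.mem_insert _ _))
  simp only [map_mul, map_inv, QuotientGroup.mk'_apply] at this
  rw [mul_inv_eq_one] at this
  exact this

lemma br3 : s 0 * s 2 = s 2 * s 0 := by
  have := rel_eq_one (rels := braidRels4)
    (Set.mem_insert_of_mem _ (Set.mem_insert_of_mem _ rfl))
  simp only [map_mul, map_inv, QuotientGroup.mk'_apply] at this
  rw [mul_inv_eq_one] at this
  exact this

-- G relations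
lemma q1 : g 0 * g 1 * g 0 = g 1 * g 0 * g 1 := by
  have := rel_eq_one (rels := quiverRels) (Set.mem_insert _ _)
  simp only [map_mul, map_inv, QuotientGroup.mk'_apply] at this
  rw [mul_inv_eq_one] at this
  exact this

lemma q2 : g 0 * g 2 * g 0 = g 2 * g 0 * g 2 := by
  have := rel_eq_one (rels := quiverRels)
    (Set.mem_insert_of_mem _ (Set.mem_insert _ _))
  simp only [map_mul, map_inv, QuotientGroup.mk'_apply] at this
  rw [mul_inv_eq_one] at this
  exact this

lemma q3 : g 1 * g 2 * g 1 = g 2 * g 1 * g 2 := by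
  have := rel_eq_one (rels := quiverRels)
    (Set.mem_insert_of_mem _ (Set.mem_insert_of_mem _ (Set.mem_insert _ _)))
  simp only [map_mul, map_inv, QuotientGroup.mk'_apply] at this
  rw [mul_inv_eq_one] at this
  exact this

lemma q4 : g 0 * g 1 * g 2 * g 0 = g 1 * g 2 * g 0 * g 1 := by
  have := rel_eq_one (rels := quiverRels)
    (Set.mem_insert_of_mem _ (Set.mem_insert_of_mem _ (Set.mem_insert_of_mem _ rfl)))
  simp only [map_mul, map_inv, QuotientGroup.mk'_apply] at this
  rw [mul_inv_eq_one] at this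
  exact this

def fφ : Fin 3 → BraidGroup4 := ![s 0, s 1, (s 1)⁻¹ * s 2 * s 1]

lemma hφ : ∀ r ∈ quiverRels, FreeGroup.lift fφ r = 1 := by
  intro r hr
  have e0 : FreeGroup.lift fφ (FreeGroup.of 0) = s 0 := by simp [fφ]
  have e1 : FreeGroup.lift fφ (FreeGroup.of 1) = s 1 := by simp [fφ]
  have e2 : FreeGroup.lift fφ (FreeGroup.of 2) = (s 1)⁻¹ * s 2 * s 1 := by simp [fφ]
  rcases hr with h | h | h | h <;> subst h <;>
    simp only [map_mul, map_inv, e0, e1, e2, mul_inv_eq_one]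
  · exact br1
  · -- s0 * (s1⁻¹ s2 s1) * s0 = (s1⁻¹ s2 s1) * s0 * (s1⁻¹ s2 s1)
    have ht : (s 1)⁻¹ * s 2 * s 1 = s 2 * s 1 * (s 2)⁻¹ :=
      calc (s 1)⁻¹ * s 2 * s 1 = (s 1)⁻¹ * (s 2 * s 1 * s 2) * (s 2)⁻¹ := by group
        _ = (s 1)⁻¹ * (s 1 * s 2 * s 1) * (s 2)⁻¹ := by rw [← br2]
        _ = s 2 * s 1 * (s 2)⁻¹ := by group
    rw [ht]
    calc s 0 * (s 2 * s 1 * (s 2)⁻¹) * s 0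
        = s 2 * (s 0 * s 1 * s 0) * (s 2)⁻¹ := by
          rw [show s 0 * (s 2 * s 1 * (s 2)⁻¹) * s 0
              = (s 0 * s 2) * s 1 * ((s 2)⁻¹ * s 0) by group,
            br3, show (s 2)⁻¹ * s 0 = s 0 * (s 2)⁻¹ from
              calc (s 2)⁻¹ * s 0 = (s 2)⁻¹ * (s 0 * s 2) * (s 2)⁻¹ := by group
                _ = (s 2)⁻¹ * (s 2 * s 0) * (s 2)⁻¹ := by rw [br3]
                _ = s 0 * (s 2)⁻¹ := by group]
          group
      _ = s 2 * (s 1 * s 0 * s 1) * (s 2)⁻¹ := by rw [br1]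
      _ = (s 2 * s 1 * (s 2)⁻¹) * s 0 * (s 2 * s 1 * (s 2)⁻¹) := by
          rw [show (s 2 * s 1 * (s 2)⁻¹) * s 0 * (s 2 * s 1 * (s 2)⁻¹)
              = s 2 * s 1 * ((s 2)⁻¹ * s 0 * s 2) * s 1 * (s 2)⁻¹ by group,
            show (s 2)⁻¹ * s 0 * s 2 = s 0 from
              calc (s 2)⁻¹ * s 0 * s 2 = (s 2)⁻¹ * (s 0 * s 2) := by group
                _ = (s 2)⁻¹ * (s 2 * s 0) := by rw [br3]
                _ = s 0 := by group]
          group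
  · -- s1 * t * s1 = t * s1 * t, t = s1⁻¹ s2 s1
    calc s 1 * ((s 1)⁻¹ * s 2 * s 1) * s 1 = s 2 * s 1 * s 1 := by group
      _ = (s 1)⁻¹ * (s 1 * s 2 * s 1) * s 1 := by group
      _ = (s 1)⁻¹ * (s 2 * s 1 * s 2) * s 1 := by rw [br2]
      _ = ((s 1)⁻¹ * s 2 * s 1) * s 1 * ((s 1)⁻¹ * s 2 * s 1) := by group
  · -- s0 s1 t s0 = s1 t s0 s1
    calc s 0 * s 1 * ((s 1)⁻¹ * s 2 * s 1) * s 0 = (s 0 * s 2) * (s 1 * s 0) := by group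
      _ = s 2 * s 0 * s 1 * s 0 := by rw [br3]; group
      _ = s 2 * (s 1 * s 0 * s 1) := by rw [← br1]; group
      _ = s 1 * ((s 1)⁻¹ * s 2 * s 1) * s 0 * s 1 := by group

def fψ : Fin 3 → QuiverBraidGroup := ![g 0, g 1, g 1 * g 2 * (g 1)⁻¹]

lemma hψ : ∀ r ∈ braidRels4, FreeGroup.lift fψ r = 1 := by
  intro r hr
  have e0 : FreeGroup.lift fψ (FreeGroup.of 0) = g 0 := by simp [fψ]
  have e1 : FreeGroup.lift fψ (FreeGroup.of 1) = g 1 := by simp [fψ]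
  have e2 : FreeGroup.lift fψ (FreeGroup.of 2) = g 1 * g 2 * (g 1)⁻¹ := by simp [fψ]
  rcases hr with h | h | h <;> subst h <;>
    simp only [map_mul, map_inv, e0, e1, e2, mul_inv_eq_one]
  · exact q1
  · -- g1 u g1 = u g1 u, u = g1 g2 g1⁻¹
    calc g 1 * (g 1 * g 2 * (g 1)⁻¹) * g 1 = g 1 * (g 1 * g 2 * g 1) * (g 1)⁻¹ := by group
      _ = g 1 * (g 2 * g 1 * g 2) * (g 1)⁻¹ := by rw [q3]
      _ = (g 1 * g 2 * (g 1)⁻¹) * g 1 * (g 1 * g 2 * (g 1)⁻¹) := by group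
  · -- g0 * u = u * g0
    calc g 0 * (g 1 * g 2 * (g 1)⁻¹) = (g 0 * g 1 * g 2 * g 0) * (g 0)⁻¹ * (g 1)⁻¹ := by group
      _ = (g 1 * g 2 * g 0 * g 1) * (g 0)⁻¹ * (g 1)⁻¹ := by rw [q4]
      _ = g 1 * g 2 * (g 0 * g 1 * (g 0)⁻¹ * (g 1)⁻¹) := by group
      _ = g 1 * g 2 * ((g 1)⁻¹ * (g 1 * g 0 * g 1) * (g 0)⁻¹ * (g 1)⁻¹) := by group
      _ = g 1 * g 2 * ((g 1)⁻¹ * (g 0 * g 1 * g 0) * (g 0)⁻¹ * (g 1)⁻¹) := by rw [q1]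
      _ = (g 1 * g 2 * (g 1)⁻¹) * g 0 := by group

/-- The quiver braid group `G` is isomorphic to the Artin braid group `Br₄`,
via an isomorphism sending `g1 ↦ s1`, `g2 ↦ s2`, `g3 ↦ s2⁻¹·s3·s2`. -/
theorem stmt_0 :
    ∃ e : QuiverBraidGroup ≃* BraidGroup4,
      e (g 0) = s 0 ∧ e (g 1) = s 1 ∧ e (g 2) = (s 1)⁻¹ * s 2 * s 1 := by
  let φ := PresentedGroup.toGroup hφ
  let ψ := PresentedGroup.toGroup hψ
  have hφ0 : φ (g 0) = s 0 := PresentedGroup.toGroup.of hφ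
  have hφ1 : φ (g 1) = s 1 := PresentedGroup.toGroup.of hφ
  have hφ2 : φ (g 2) = (s 1)⁻¹ * s 2 * s 1 := PresentedGroup.toGroup.of hφ
  have hψ0 : ψ (s 0) = g 0 := PresentedGroup.toGroup.of hψ
  have hψ1 : ψ (s 1) = g 1 := PresentedGroup.toGroup.of hψ
  have hψ2 : ψ (s 2) = g 1 * g 2 * (g 1)⁻¹ := PresentedGroup.toGroup.of hψ
  have h1 : ψ.comp φ = MonoidHom.id _ := by
    apply PresentedGroup.ext
    intro x
    fin_cases x <;>
      simp only [MonoidHom.comp_apply, MonoidHom.id_apply]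
    · change ψ (φ (g 0)) = g 0; rw [hφ0, hψ0]
    · change ψ (φ (g 1)) = g 1; rw [hφ1, hψ1]
    · change ψ (φ (g 2)) = g 2; rw [hφ2]; simp [map_mul, map_inv, hψ1, hψ2]; group
  have h2 : φ.comp ψ = MonoidHom.id _ := by
    apply PresentedGroup.ext
    intro x
    fin_cases x <;>
      simp only [MonoidHom.comp_apply, MonoidHom.id_apply]
    · change φ (ψ (s 0)) = s 0; rw [hψ0, hφ0]
    · change φ (ψ (s 1)) = s 1; rw [hψ1, hφ1]
    · change φ (ψ (s 2)) = s 2; rw [hψ2]; simp [map_mul, map_inv, hφ1, hφ2]; group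
  exact ⟨MonoidHom.toMulEquiv φ ψ h1 h2, hφ0, hφ1, hφ2⟩
end

section
/- The quiver braid group G is isomorphic to the presented group G' on generators h1, h2, h3 with relations h1h2h1 = h2h1h2, h1h3h1 = h3h1h3, h2h3h2 = h3h2h3, and h2h3h1h2 = h3h1h2h3, via the homomorphism sending g_i ↦ h_i for i = 1, 2, 3; in particular the quiver braid group presentation does not depend on which arrow of the 3-cycle the length-four relation is attached to. -/
/-- The relators of the presented group `G'` on generators `h1, h2, h3`:
`h1h2h1 = h2h1h2`, `h1h3h1 = h3h1h3`, `h2h3h2 = h3h2h3`, and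
`h2h3h1h2 = h3h1h2h3`. -/
def quiverRels' : Set (FreeGroup (Fin 3)) :=
  { FreeGroup.of 0 * FreeGroup.of 1 * FreeGroup.of 0 *
      (FreeGroup.of 1 * FreeGroup.of 0 * FreeGroup.of 1)⁻¹,
    FreeGroup.of 0 * FreeGroup.of 2 * FreeGroup.of 0 *
      (FreeGroup.of 2 * FreeGroup.of 0 * FreeGroup.of 2)⁻¹,
    FreeGroup.of 1 * FreeGroup.of 2 * FreeGroup.of 1 *
      (FreeGroup.of 2 * FreeGroup.of 1 * FreeGroup.of 2)⁻¹,
    FreeGroup.of 1 * FreeGroup.of 2 * FreeGroup.of 0 * FreeGroup.of 1 *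
      (FreeGroup.of 2 * FreeGroup.of 0 * FreeGroup.of 1 * FreeGroup.of 2)⁻¹ }

/-- The presented group `G'`. -/
abbrev QuiverBraidGroup' := PresentedGroup quiverRels'

/-- The generators `h1, h2, h3` of `G'` (indexed by `0, 1, 2`). -/
def h (i : Fin 3) : QuiverBraidGroup' := PresentedGroup.of i

/-!
With the braid relations `aba = bab` and `bcb = cbc`, the relation `abca = bcab` is equivalent to
`b` commuting with `a⁻¹ca`, and its cyclic rotation `bcab = cabc` to `c` commuting with `b⁻¹ab`.
Conjugating by `a` and using `aba⁻¹ = b⁻¹ab` turns the first commutation into the second, so the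
two length-four relations are interchangeable in the presence of the braid relations. Hence both
sets of relators have the same models in every group, and therefore the same normal closure in the
free group.
-/

section CyclicBraid

variable {G : Type*} [Group G] {a b c : G}

theorem mul_mul_mul_mul_eq_iff_commute (hab : a * b * a = b * a * b) :
    a * b * c * a = b * c * a * b ↔ Commute b (a⁻¹ * c * a) := by
  have hl : a * b * c * a = b * a * (b * (a⁻¹ * c * a)) :=
    calc a * b * c * a = a * b * a * (a⁻¹ * c * a) := by group
      _ = b * a * (b * (a⁻¹ * c * a)) := by rw [hab]; group
  have hr : b * c * a * b = b * a * (a⁻¹ * c * a * b) := by group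
  rw [hl, hr, mul_right_inj]
  rfl

theorem mul_mul_inv_eq_inv_mul_mul_of_braid (hab : a * b * a = b * a * b) :
    a * b * a⁻¹ = b⁻¹ * a * b :=
  calc a * b * a⁻¹ = b⁻¹ * (b * a * b) * a⁻¹ := by group
    _ = b⁻¹ * a * b := by rw [← hab]; group

theorem abca_eq_bcab_iff_bcab_eq_cabc (hab : a * b * a = b * a * b)
    (hbc : b * c * b = c * b * c) :
    a * b * c * a = b * c * a * b ↔ b * c * a * b = c * a * b * c := by
  rw [mul_mul_mul_mul_eq_iff_commute hab, mul_mul_mul_mul_eq_iff_commute hbc,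
    ← Commute.conj_iff a, mul_mul_inv_eq_inv_mul_mul_of_braid hab,
    show a * (a⁻¹ * c * a) * a⁻¹ = c by group]
  exact Commute.symm_iff

end CyclicBraid

theorem PresentedGroup.lift_of_eq_mk {α : Type*} (rels : Set (FreeGroup α)) :
    FreeGroup.lift (PresentedGroup.of (rels := rels)) = PresentedGroup.mk rels :=
  FreeGroup.ext_hom _ _ fun _ => by rw [FreeGroup.lift_apply_of]; rfl

theorem Subgroup.normalClosure_le_of_forall_lift_eq_one {α : Type*}
    {rels rels' : Set (FreeGroup α)}
    (h : ∀ f : α → PresentedGroup rels', (∀ r ∈ rels', FreeGroup.lift f r = 1) →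
      ∀ r ∈ rels, FreeGroup.lift f r = 1) :
    Subgroup.normalClosure rels ≤ Subgroup.normalClosure rels' := by
  refine Subgroup.normalClosure_le_normal fun r hr => PresentedGroup.mk_eq_one_iff.mp ?_
  rw [← PresentedGroup.lift_of_eq_mk]
  refine h _ (fun r' hr' => ?_) r hr
  rw [PresentedGroup.lift_of_eq_mk]
  exact PresentedGroup.one_of_mem hr'

theorem forall_mem_quiverRels_lift_eq_one_iff {H : Type*} [Group H] (f : Fin 3 → H) :
    (∀ r ∈ quiverRels, FreeGroup.lift f r = 1) ↔
      f 0 * f 1 * f 0 = f 1 * f 0 * f 1 ∧ f 0 * f 2 * f 0 = f 2 * f 0 * f 2 ∧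
        f 1 * f 2 * f 1 = f 2 * f 1 * f 2 ∧ f 0 * f 1 * f 2 * f 0 = f 1 * f 2 * f 0 * f 1 := by
  simp only [quiverRels, Set.forall_mem_insert, Set.mem_singleton_iff, forall_eq, map_mul,
    map_inv, FreeGroup.lift_apply_of, mul_inv_eq_one]

theorem forall_mem_quiverRels'_lift_eq_one_iff {H : Type*} [Group H] (f : Fin 3 → H) :
    (∀ r ∈ quiverRels', FreeGroup.lift f r = 1) ↔
      f 0 * f 1 * f 0 = f 1 * f 0 * f 1 ∧ f 0 * f 2 * f 0 = f 2 * f 0 * f 2 ∧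
        f 1 * f 2 * f 1 = f 2 * f 1 * f 2 ∧ f 1 * f 2 * f 0 * f 1 = f 2 * f 0 * f 1 * f 2 := by
  simp only [quiverRels', Set.forall_mem_insert, Set.mem_singleton_iff, forall_eq, map_mul,
    map_inv, FreeGroup.lift_apply_of, mul_inv_eq_one]

theorem forall_mem_quiverRels_lift_eq_one_iff_quiverRels' {H : Type*} [Group H]
    (f : Fin 3 → H) :
    (∀ r ∈ quiverRels, FreeGroup.lift f r = 1) ↔ ∀ r ∈ quiverRels', FreeGroup.lift f r = 1 := by
  rw [forall_mem_quiverRels_lift_eq_one_iff, forall_mem_quiverRels'_lift_eq_one_iff]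
  exact and_congr_right fun hab => and_congr_right fun _ => and_congr_right fun hbc =>
    abca_eq_bcab_iff_bcab_eq_cabc hab hbc

theorem normalClosure_quiverRels_eq :
    Subgroup.normalClosure quiverRels = Subgroup.normalClosure quiverRels' :=
  le_antisymm
    (Subgroup.normalClosure_le_of_forall_lift_eq_one fun f =>
      (forall_mem_quiverRels_lift_eq_one_iff_quiverRels' f).mpr)
    (Subgroup.normalClosure_le_of_forall_lift_eq_one fun f =>
      (forall_mem_quiverRels_lift_eq_one_iff_quiverRels' f).mp)

/-- `G` is isomorphic to `G'` via `g_i ↦ h_i`: the quiver braid group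
presentation does not depend on which arrow of the 3-cycle the length-four
relation is attached to. -/
theorem stmt_8 :
    ∃ e : QuiverBraidGroup ≃* QuiverBraidGroup', ∀ i : Fin 3, e (g i) = h i :=
  ⟨QuotientGroup.quotientMulEquivOfEq normalClosure_quiverRels_eq, fun _ => rfl⟩
end
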